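/- arXiv:2502.00600 — 3 statements merged into one kernel-verified Lean document; each statement's English description precedes it below -/
import Mathlib

section
/- Let A be an Archimedean semiprime f-algebra and a, b, c ∈ A. If a²·|b| ≤ |a·c|, then |a·b| ≤ |c|. -/
/-!  Setting: `A` is a (possibly non-unital) commutative ring which is also a lattice,
with a translation-invariant order (i.e. a lattice-ordered additive group). -/

section Defs

variable (A : Type*) [NonUnitalCommRing A] [Lattice A]
  [CovariantClass A A (· + ·) (· ≤ ·)]

/-- The positive cone is closed under multiplication (lattice-ordered algebra/ring). -/
def MulPos : Prop := ∀ a b : A, 0 ≤ a → 0 ≤ b → 0 ≤ a * b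

/-- The `f`-algebra condition: `a ⊓ b = 0` implies `(a*c) ⊓ b = 0` and `(c*a) ⊓ b = 0`
for every `c ≥ 0`. -/
def FCond : Prop := ∀ a b c : A, a ⊓ b = 0 → 0 ≤ c → (a * c) ⊓ b = 0 ∧ (c * a) ⊓ b = 0

/-- Semiprime: no nonzero nilpotent elements (for commutative rings this is
equivalent to: squares vanish only at `0`). -/
def Semiprime : Prop := ∀ a : A, a * a = 0 → a = 0

/-- The (additive) order on `A` is Archimedean. -/
def ArchOrder : Prop := ∀ x y : A, (∀ n : ℕ, n • x ≤ y) → x ≤ 0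

/-- `b` is a quasi-inverse of `a`. -/
def IsQuasiInverse (a b : A) : Prop := a + b = a * b

/-- `a` is quasi-invertible. -/
def QuasiInvertible (a : A) : Prop := ∃ b : A, a + b = a * b

/-- `A` is bounded quasi-inversion closed. -/
def BddQuasiInvClosed : Prop :=
  ∀ a : A, |a| ≤ |a * a - a| → QuasiInvertible A a

/-- A bounded element: `a² ≤ μ|a|` for some real `μ > 0`. -/
def IsBoundedElem [Module ℝ A] (a : A) : Prop := ∃ μ : ℝ, 0 < μ ∧ a * a ≤ μ • |a|

end Defs


set_option linter.unusedSectionVars false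
set_option linter.unusedVariables false

section AuxProof

variable {A : Type*} [NonUnitalCommRing A] [Lattice A]
  [CovariantClass A A (· + ·) (· ≤ ·)]

private lemma aux_mul_eq_zero_of_inf (hf : FCond A) {x y : A} (h : x ⊓ y = 0) :
    x * y = 0 := by
  have hx : 0 ≤ x := by simpa [h] using inf_le_left (a := x) (b := y)
  have hy : 0 ≤ y := by simpa [h] using inf_le_right (a := x) (b := y)
  have h1 : (x * y) ⊓ y = 0 := (hf x y y h hy).1
  have h1' : y ⊓ (x * y) = 0 := by rwa [inf_comm] at h1
  have h5 : (x * y) ⊓ (x * y) = 0 := (hf y (x * y) x h1' hx).2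
  simpa using h5

private lemma aux_posPart_of_disjoint {u v : A} (huv : u ⊓ v = 0) : (u - v)⁺ = u := by
  have hsup : u ⊔ v = u + v := by
    have := inf_add_sup u v
    rw [huv, zero_add] at this
    exact this
  rw [posPart_def]
  have h0 : (0 : A) = v - v := by rw [sub_self]
  rw [h0, ← sup_sub, hsup, add_sub_cancel_right]

private lemma aux_mul_posPart (hf : FCond A) {p : A} (hp : 0 ≤ p) (x : A) :
    (p * x)⁺ = p * x⁺ := by
  have hd : x⁺ ⊓ x⁻ = 0 := posPart_inf_negPart_eq_zero x
  have h1 : (x⁺ * p) ⊓ x⁻ = 0 := (hf x⁺ x⁻ p hd hp).1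
  have h2 : (p * x⁻) ⊓ (x⁺ * p) = 0 := (hf x⁻ (x⁺ * p) p (by rwa [inf_comm] at h1) hp).2
  have h3 : (p * x⁺) ⊓ (p * x⁻) = 0 := by
    rw [inf_comm] at h2; rwa [mul_comm x⁺ p] at h2
  have hdec : p * x = p * x⁺ - p * x⁻ := by rw [← mul_sub, posPart_sub_negPart]
  rw [hdec, aux_posPart_of_disjoint h3]

private lemma aux_prod_disjoint (hf : FCond A) {u v : A} (huv : u ⊓ v = 0)
    {p q : A} (hp : 0 ≤ p) (hq : 0 ≤ q) : (p * u) ⊓ (q * v) = 0 := by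
  have h1 : (u * p) ⊓ v = 0 := (hf u v p huv hp).1
  have h2 : (q * v) ⊓ (u * p) = 0 := (hf v (u * p) q (by rwa [inf_comm] at h1) hq).2
  rw [inf_comm] at h2; rwa [mul_comm u p] at h2

private lemma aux_inf_add (hf : FCond A) {x y z : A} (hx : 0 ≤ x) (hy : 0 ≤ y)
    (hz : 0 ≤ z) (hxz : x ⊓ z = 0) (hyz : y ⊓ z = 0) : (x + y) ⊓ z = 0 := by
  set w := (x + y) ⊓ z with hw
  have hw0 : 0 ≤ w := le_inf (add_nonneg hx hy) hz
  have key : w - y ⊓ z ≤ x ⊓ z := by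
    refine le_inf ?_ ?_
    · have h1 : w - y ≤ x := by
        have : w ≤ x + y := inf_le_left
        exact sub_le_iff_le_add.mpr this
      have h2 : w - z ≤ x := le_trans (sub_nonpos.mpr inf_le_right) hx
      have : w - y ⊓ z = (w - y) ⊔ (w - z) := by
        rw [sub_eq_add_neg, neg_inf, add_sup, ← sub_eq_add_neg, ← sub_eq_add_neg]
      rw [this]; exact sup_le h1 h2
    · have : y ⊓ z ≥ 0 := le_inf hy hz
      calc w - y ⊓ z ≤ w - 0 := by exact sub_le_sub_left this w
        _ = w := sub_zero w
        _ ≤ z := inf_le_right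
  have : w ≤ x ⊓ z + y ⊓ z := sub_le_iff_le_add.mp key
  rw [hxz, hyz, add_zero] at this
  exact le_antisymm this hw0

private lemma aux_abs_mul (hmul : MulPos A) (hf : FCond A) (x y : A) :
    |x * y| = |x| * |y| := by
  set P := x⁺ * y⁺ + x⁻ * y⁻ with hP
  set N := x⁺ * y⁻ + x⁻ * y⁺ with hN
  have hxp : (0:A) ≤ x⁺ := posPart_nonneg x
  have hxn : (0:A) ≤ x⁻ := negPart_nonneg x
  have hyp : (0:A) ≤ y⁺ := posPart_nonneg y
  have hyn : (0:A) ≤ y⁻ := negPart_nonneg y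
  have hdy : y⁺ ⊓ y⁻ = 0 := posPart_inf_negPart_eq_zero y
  have hdx : x⁺ ⊓ x⁻ = 0 := posPart_inf_negPart_eq_zero x
  have hdx' : x⁻ ⊓ x⁺ = 0 := by rwa [inf_comm] at hdx
  have hdy' : y⁻ ⊓ y⁺ = 0 := by rwa [inf_comm] at hdy
  have d1 : (x⁺ * y⁺) ⊓ (x⁺ * y⁻) = 0 :=
    aux_prod_disjoint hf (u := y⁺) (v := y⁻) hdy hxp hxp
  have d2 : (x⁺ * y⁺) ⊓ (x⁻ * y⁺) = 0 := by
    have := aux_prod_disjoint hf (u := x⁺) (v := x⁻) hdx hyp hyp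
    rwa [mul_comm y⁺ x⁺, mul_comm y⁺ x⁻] at this
  have d3 : (x⁻ * y⁻) ⊓ (x⁺ * y⁻) = 0 := by
    have := aux_prod_disjoint hf (u := x⁻) (v := x⁺) hdx' hyn hyn
    rwa [mul_comm y⁻ x⁻, mul_comm y⁻ x⁺] at this
  have d4 : (x⁻ * y⁻) ⊓ (x⁻ * y⁺) = 0 :=
    aux_prod_disjoint hf (u := y⁻) (v := y⁺) hdy' hxn hxn
  have hPn : (0:A) ≤ P := add_nonneg (hmul _ _ hxp hyp) (hmul _ _ hxn hyn)
  have hNn1 : (0:A) ≤ x⁺ * y⁻ := hmul _ _ hxp hyn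
  have hNn2 : (0:A) ≤ x⁻ * y⁺ := hmul _ _ hxn hyp
  have hd12 : P ⊓ (x⁺ * y⁻) = 0 :=
    aux_inf_add hf (hmul _ _ hxp hyp) (hmul _ _ hxn hyn) hNn1 d1 d3
  have hd21 : P ⊓ (x⁻ * y⁺) = 0 :=
    aux_inf_add hf (hmul _ _ hxp hyp) (hmul _ _ hxn hyn) hNn2 d2 d4
  have hPN : N ⊓ P = 0 :=
    aux_inf_add hf hNn1 hNn2 hPn (by rwa [inf_comm] at hd12) (by rwa [inf_comm] at hd21)
  have hPN' : P ⊓ N = 0 := by rwa [inf_comm] at hPN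
  have key : x * y = P - N := by
    have e : (x⁺ - x⁻) * (y⁺ - y⁻) = P - N := by
      rw [hP, hN, sub_mul, mul_sub, mul_sub]; abel
    rw [posPart_sub_negPart, posPart_sub_negPart] at e
    exact e
  have keyabs : |x| * |y| = P + N := by
    have e : (x⁺ + x⁻) * (y⁺ + y⁻) = P + N := by
      rw [hP, hN, add_mul, mul_add, mul_add]; abel
    rw [posPart_add_negPart, posPart_add_negPart] at e
    exact e
  have hpos : (x * y)⁺ = P := by rw [key, aux_posPart_of_disjoint hPN']
  have hneg : (x * y)⁻ = N := by
    rw [← posPart_neg, key, neg_sub, aux_posPart_of_disjoint hPN]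
  rw [← posPart_add_negPart (x * y), hpos, hneg, keyabs]

end AuxProof

/-- If `a²·|b| ≤ |a·c|` then `|a·b| ≤ |c|`. -/
theorem abs_mul_le_of_sq_mul_abs_le {A : Type*} [NonUnitalCommRing A] [Lattice A]
    [CovariantClass A A (· + ·) (· ≤ ·)]
    (hmul : MulPos A) (hf : FCond A) (hsp : Semiprime A) (harch : ArchOrder A)
    (a b c : A) (h : a * a * |b| ≤ |a * c|) : |a * b| ≤ |c| := by
  set p := |a| with hpdef
  have hp : (0:A) ≤ p := abs_nonneg a
  have hab : |a * b| = p * |b| := aux_abs_mul hmul hf a b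
  have hac : |a * c| = p * |c| := aux_abs_mul hmul hf a c
  have hsq : a * a = p * p := by
    have h0 : a⁺ * a⁻ = 0 := aux_mul_eq_zero_of_inf hf (posPart_inf_negPart_eq_zero a)
    have e : (a⁺ - a⁻) * (a⁺ - a⁻) = (a⁺ + a⁻) * (a⁺ + a⁻) := by
      rw [sub_mul, mul_sub, mul_sub, add_mul, mul_add, mul_add, h0, mul_comm a⁻ a⁺, h0]
      abel
    rw [posPart_sub_negPart, posPart_add_negPart] at e
    exact e
  have h' : p * |a * b| ≤ p * |c| := by
    calc p * |a * b| = a * a * |b| := by rw [hab, hsq, mul_assoc]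
      _ ≤ |a * c| := h
      _ = p * |c| := hac
  set w := |a * b| - |c| with hwdef
  have hw : p * w ≤ 0 := by
    rw [hwdef, mul_sub]
    exact sub_nonpos.mpr h'
  have hpd : p * w⁺ = 0 := by
    rw [← aux_mul_posPart hf hp w]
    exact posPart_eq_zero.mpr hw
  have hdle : w⁺ ≤ |a * b| := by
    rw [posPart_def]
    exact sup_le (sub_le_self _ (abs_nonneg c)) (abs_nonneg _)
  have hd0 : (0:A) ≤ w⁺ := posPart_nonneg w
  have hsq0 : w⁺ * w⁺ = 0 := by
    have h1 : w⁺ * w⁺ ≤ w⁺ * |a * b| := by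
      have h0 : (0:A) ≤ w⁺ * |a * b| - w⁺ * w⁺ := by
        rw [← mul_sub]
        exact hmul w⁺ (|a * b| - w⁺) hd0 (sub_nonneg.mpr hdle)
      exact sub_nonneg.mp h0
    have h2 : w⁺ * |a * b| = 0 := by
      rw [hab, ← mul_assoc, mul_comm w⁺ p, hpd, zero_mul]
    exact le_antisymm (h2 ▸ h1) (hmul _ _ hd0 hd0)
  have hw0 : w⁺ = 0 := hsp _ hsq0
  have : w ≤ 0 := posPart_eq_zero.mp hw0
  rw [hwdef] at this
  exact sub_nonpos.mp this
end

section
/- Let A be an Archimedean semiprime f-algebra. An element a ∈ A is bounded (i.e., a² ≤ μ|a| for some real μ > 0) if and only if for every x ∈ A there exists λ > 0 with |a·x| ≤ λ|x|. -/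
set_option linter.unusedSectionVars false

section AuxLemmas

variable {A : Type*} [NonUnitalCommRing A] [Lattice A]
  [CovariantClass A A (· + ·) (· ≤ ·)]

private lemma nsmul_mul'' (n : ℕ) (x y : A) : (n • x) * y = n • (x * y) := by
  induction n with
  | zero => simp
  | succ n ih => rw [succ_nsmul, succ_nsmul, add_mul, ih]

private lemma mul_nsmul_c (n : ℕ) (x y : A) : x * (n • y) = n • (x * y) := by
  rw [mul_comm, nsmul_mul'', mul_comm]

/-- In an f-ring, disjoint elements have zero product. -/
private lemma disjoint_mul (hf : FCond A) {a b : A} (h : a ⊓ b = 0) : a * b = 0 := by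
  have ha : 0 ≤ a := h ▸ inf_le_left
  have hb : 0 ≤ b := h ▸ inf_le_right
  have h1 : (a * b) ⊓ b = 0 := (hf a b b h hb).1
  have h2 : (b * a) ⊓ (a * b) = 0 := (hf b (a * b) a (by rw [inf_comm]; exact h1) ha).1
  rw [mul_comm b a, inf_idem] at h2
  exact h2

private lemma abs_nonneg' (a : A) : (0:A) ≤ |a| := by
  rw [← posPart_add_negPart a]
  exact add_nonneg (posPart_nonneg a) (negPart_nonneg a)

/-- Key lemma: if `0 ≤ p`, `0 ≤ x` and `p * p ≤ n • p`, then `p * x ≤ n • x`. -/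
private lemma key_lemma (hmul : MulPos A) (hf : FCond A) (hsp : Semiprime A)
    {p x : A} (n : ℕ) (hp : 0 ≤ p) (hx : 0 ≤ x) (h : p * p ≤ n • p) :
    p * x ≤ n • x := by
  obtain ⟨y, hy⟩ : ∃ y : A, y = p * x - n • x := ⟨_, rfl⟩
  -- p * y ≤ 0
  have hpy : p * y ≤ 0 := by
    have h1 : 0 ≤ (n • p - p * p) * x := hmul _ _ (sub_nonneg.2 h) hx
    have h2 : p * y = p * (p * x - n • x) := congrArg (p * ·) hy
    have h3 : (n • p - p * p) * x = - (p * y) := by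
      rw [h2, mul_sub, mul_nsmul_c, sub_mul, nsmul_mul'', ← mul_assoc]
      abel
    rw [h3, neg_nonneg] at h1
    exact h1
  have hdisj : y⁺ ⊓ y⁻ = 0 := posPart_inf_negPart_eq_zero y
  have h3 : (y⁺ * p) ⊓ y⁻ = 0 := (hf _ _ p hdisj hp).1
  have h4 : (y⁻ * p) ⊓ (y⁺ * p) = 0 :=
    (hf y⁻ (y⁺ * p) p (by rw [inf_comm]; exact h3) hp).1
  -- p * y⁺ = 0
  have h5 : p * y⁺ ≤ p * y⁻ := by
    have h6 : p * y⁺ - p * y⁻ ≤ 0 := by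
      rw [← mul_sub, posPart_sub_negPart]; exact hpy
    exact sub_nonpos.1 h6
  have h7 : p * y⁺ = 0 := by
    have hle : p * y⁺ ≤ (y⁻ * p) ⊓ (y⁺ * p) :=
      le_inf (by rw [mul_comm y⁻ p]; exact h5) (by rw [mul_comm p y⁺])
    have hge : 0 ≤ p * y⁺ := hmul _ _ hp (posPart_nonneg y)
    rw [h4] at hle
    exact le_antisymm hle hge
  -- (y⁺)² = 0
  have h8 : y⁺ * y⁻ = 0 := disjoint_mul hf hdisj
  have h9 : y⁺ * y = y⁺ * y⁺ := by
    have e : y⁺ * (y⁺ - y⁻) = y⁺ * y⁺ - y⁺ * y⁻ := mul_sub _ _ _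
    rw [posPart_sub_negPart, h8, sub_zero] at e
    exact e
  have h10 : y⁺ * y ≤ 0 := by
    have he : y⁺ * y = y⁺ * (p * x - n • x) := congrArg (y⁺ * ·) hy
    rw [mul_sub, mul_nsmul_c, ← mul_assoc, mul_comm y⁺ p, h7, zero_mul, zero_sub] at he
    rw [he]
    simp only [neg_nonpos]
    exact nsmul_nonneg (hmul _ _ (posPart_nonneg y) hx) n
  have h11 : y⁺ * y⁺ = 0 := by
    have hge : 0 ≤ y⁺ * y⁺ := hmul _ _ (posPart_nonneg y) (posPart_nonneg y)
    exact le_antisymm (h9 ▸ h10) hge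
  have h12 : y ≤ 0 := posPart_eq_zero.1 (hsp _ h11)
  rw [hy, sub_nonpos] at h12
  exact h12

/-- `|a * x| ≤ |a| * |x|` in a lattice-ordered commutative ring. -/
private lemma abs_mul_le (hmul : MulPos A) (a x : A) : |a * x| ≤ |a| * |x| := by
  have h1 : 0 ≤ a⁺ := posPart_nonneg a
  have h2 : 0 ≤ a⁻ := negPart_nonneg a
  have h3 : 0 ≤ x⁺ := posPart_nonneg x
  have h4 : 0 ≤ x⁻ := negPart_nonneg x
  have e3 : |a| = a⁺ + a⁻ := (posPart_add_negPart a).symm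
  have e4 : |x| = x⁺ + x⁻ := (posPart_add_negPart x).symm
  have exy : a * x = (a⁺ - a⁻) * (x⁺ - x⁻) := by
    rw [posPart_sub_negPart, posPart_sub_negPart]
  rw [abs]
  apply sup_le
  · rw [← sub_nonneg, e3, e4, exy,
      show (a⁺ + a⁻) * (x⁺ + x⁻) - (a⁺ - a⁻) * (x⁺ - x⁻)
        = (a⁺ * x⁻ + a⁻ * x⁺) + (a⁺ * x⁻ + a⁻ * x⁺) by
        rw [add_mul, mul_add, mul_add, sub_mul, mul_sub, mul_sub]; abel]
    exact add_nonneg (add_nonneg (hmul _ _ h1 h4) (hmul _ _ h2 h3))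
      (add_nonneg (hmul _ _ h1 h4) (hmul _ _ h2 h3))
  · rw [← sub_nonneg, sub_neg_eq_add, e3, e4, exy,
      show (a⁺ + a⁻) * (x⁺ + x⁻) + (a⁺ - a⁻) * (x⁺ - x⁻)
        = (a⁺ * x⁺ + a⁻ * x⁻) + (a⁺ * x⁺ + a⁻ * x⁻) by
        rw [add_mul, mul_add, mul_add, sub_mul, mul_sub, mul_sub]; abel]
    exact add_nonneg (add_nonneg (hmul _ _ h1 h3) (hmul _ _ h2 h4))
      (add_nonneg (hmul _ _ h1 h3) (hmul _ _ h2 h4))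

/-- `a * a = |a| * |a|`. -/
private lemma sq_eq_abs_sq (hf : FCond A) (a : A) : a * a = |a| * |a| := by
  have h8 : a⁺ * a⁻ = 0 := disjoint_mul hf (posPart_inf_negPart_eq_zero a)
  have h9 : a⁻ * a⁺ = 0 := by rw [mul_comm]; exact h8
  have e3 : |a| = a⁺ + a⁻ := (posPart_add_negPart a).symm
  have exy : a * a = (a⁺ - a⁻) * (a⁺ - a⁻) := by rw [posPart_sub_negPart]
  rw [exy, e3, sub_mul, mul_sub, mul_sub, add_mul, mul_add, mul_add, h8, h9]
  abel

end AuxLemmas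

/-- `a` is bounded iff for every `x` there is `λ > 0` with `|a·x| ≤ λ|x|`. -/
theorem isBoundedElem_iff {A : Type*} [NonUnitalCommRing A] [Lattice A]
    [CovariantClass A A (· + ·) (· ≤ ·)] [Module ℝ A]
    (hsmul : ∀ (r : ℝ) (x : A), 0 ≤ r → 0 ≤ x → 0 ≤ r • x)
    (hmul : MulPos A) (hf : FCond A) (hsp : Semiprime A) (harch : ArchOrder A)
    (a : A) :
    IsBoundedElem A a ↔ ∀ x : A, ∃ lam : ℝ, 0 < lam ∧ |a * x| ≤ lam • |x| := by
  constructor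
  · rintro ⟨μ, hμ, hbd⟩ x
    set n : ℕ := ⌈μ⌉₊ + 1 with hn
    have hμn : μ ≤ (n : ℝ) := le_trans (Nat.le_ceil μ) (by exact_mod_cast Nat.le_succ _)
    have habs : (0:A) ≤ |a| := abs_nonneg' a
    have habsx : (0:A) ≤ |x| := abs_nonneg' x
    have hbd' : a * a ≤ n • |a| := by
      have h1 : μ • |a| ≤ (n : ℝ) • |a| := by
        have h2 := hsmul ((n : ℝ) - μ) |a| (by linarith) habs
        rw [sub_smul, sub_nonneg] at h2
        exact h2
      rw [Nat.cast_smul_eq_nsmul ℝ n |a|] at h1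
      exact le_trans hbd h1
    have hbd2 : |a| * |a| ≤ n • |a| := by rw [← sq_eq_abs_sq hf a]; exact hbd'
    have hkey : |a| * |x| ≤ n • |x| := key_lemma hmul hf hsp n habs habsx hbd2
    refine ⟨(n : ℝ), by positivity, ?_⟩
    rw [Nat.cast_smul_eq_nsmul ℝ n |x|]
    exact le_trans (abs_mul_le hmul a x) hkey
  · intro h
    obtain ⟨lam, hlam, hle⟩ := h a
    refine ⟨lam, hlam, ?_⟩
    have hsq : (0:A) ≤ a * a := by
      rw [sq_eq_abs_sq hf a]
      exact hmul _ _ (abs_nonneg' a) (abs_nonneg' a)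
    rwa [abs_of_nonneg hsq] at hle
end

section
/- Let A be an Archimedean f-algebra with unit e that is bounded inversion closed, and let B ⊆ A be a vector sublattice of A that is also a ring ideal of A. Then B, as an f-algebra in its own right, is bounded quasi-inversion closed. -/
section Aux
variable {A : Type*} [CommRing A] [Lattice A] [CovariantClass A A (· + ·) (· ≤ ·)]

lemma aux_pn_mul_zero
    (hf : ∀ a b c : A, a ⊓ b = 0 → 0 ≤ c → (a * c) ⊓ b = 0 ∧ (c * a) ⊓ b = 0)
    (x : A) : x⁺ * x⁻ = 0 := by
  have h1 : (x⁺ * x⁻) ⊓ x⁻ = 0 :=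
    (hf x⁺ x⁻ x⁻ (posPart_inf_negPart_eq_zero x) (negPart_nonneg x)).1
  rw [inf_comm] at h1
  have h2 := (hf x⁻ (x⁺ * x⁻) x⁺ h1 (posPart_nonneg x)).2
  rwa [inf_idem] at h2

lemma aux_abs_sq
    (hf : ∀ a b c : A, a ⊓ b = 0 → 0 ≤ c → (a * c) ⊓ b = 0 ∧ (c * a) ⊓ b = 0)
    (x : A) : |x| * |x| = x * x := by
  have h := aux_pn_mul_zero hf x
  have key : (x⁺ + x⁻) * (x⁺ + x⁻) = (x⁺ - x⁻) * (x⁺ - x⁻) := by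
    linear_combination (4 : A) * h
  calc |x| * |x| = (x⁺ + x⁻) * (x⁺ + x⁻) := by rw [posPart_add_negPart]
    _ = (x⁺ - x⁻) * (x⁺ - x⁻) := key
    _ = x * x := by rw [posPart_sub_negPart]

set_option linter.unusedSectionVars false in
lemma aux_half [Module ℝ A] (hsmul : ∀ (r : ℝ) (x : A), 0 ≤ r → 0 ≤ x → 0 ≤ r • x)
    (w : A) (h : 0 ≤ w + w) : 0 ≤ w := by
  have := hsmul (1/2) (w + w) (by norm_num) h
  rwa [show w + w = (2:ℝ) • w from (two_smul ℝ w).symm, smul_smul,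
    show (1/2 : ℝ) * 2 = 1 by norm_num, one_smul] at this

lemma aux_abs_mul_le [Module ℝ A]
    (hsmul : ∀ (r : ℝ) (x : A), 0 ≤ r → 0 ≤ x → 0 ≤ r • x)
    (hmul : ∀ a b : A, 0 ≤ a → 0 ≤ b → 0 ≤ a * b)
    (x y : A) : |x * y| ≤ |x| * |y| := by
  have hx1 : 0 ≤ |x| - x := sub_nonneg.2 (le_abs_self x)
  have hx2 : 0 ≤ |x| + x := by simpa [add_comm] using add_le_add_right (neg_le_abs x) x
  have hy1 : 0 ≤ |y| - y := sub_nonneg.2 (le_abs_self y)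
  have hy2 : 0 ≤ |y| + y := by simpa [add_comm] using add_le_add_right (neg_le_abs y) y
  have hA : 0 ≤ (|x| - x) * (|y| - y) := hmul _ _ hx1 hy1
  have hB : 0 ≤ (|x| + x) * (|y| + y) := hmul _ _ hx2 hy2
  have hC : 0 ≤ (|x| - x) * (|y| + y) := hmul _ _ hx1 hy2
  have hD : 0 ≤ (|x| + x) * (|y| - y) := hmul _ _ hx2 hy1
  have h1 : 0 ≤ |x| * |y| + x * y := by
    apply aux_half hsmul
    calc (0:A) ≤ (|x| - x) * (|y| - y) + (|x| + x) * (|y| + y) := by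
          simpa using add_le_add hA hB
      _ = (|x| * |y| + x * y) + (|x| * |y| + x * y) := by ring
  have h2 : 0 ≤ |x| * |y| - x * y := by
    apply aux_half hsmul
    calc (0:A) ≤ (|x| - x) * (|y| + y) + (|x| + x) * (|y| - y) := by
          simpa using add_le_add hC hD
      _ = (|x| * |y| - x * y) + (|x| * |y| - x * y) := by ring
  have h1' : 0 ≤ |x| * |y| - -(x * y) := by simpa [sub_neg_eq_add] using h1
  exact abs_le'.2 ⟨sub_nonneg.1 h2, sub_nonneg.1 h1'⟩

end Aux

/-- A vector sublattice and ring ideal of a bounded inversion closed Archimedean unital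
f-algebra is itself bounded quasi-inversion closed. -/
theorem ring_ideal_bddQuasiInvClosed {A : Type*} [CommRing A] [Lattice A]
    [CovariantClass A A (· + ·) (· ≤ ·)] [Module ℝ A]
    (hsmul : ∀ (r : ℝ) (x : A), 0 ≤ r → 0 ≤ x → 0 ≤ r • x)
    (hmul : MulPos A) (hf : FCond A) (harch : ArchOrder A)
    (hbic : ∀ a : A, 1 ≤ a → IsUnit a)
    (B : Set A) (h0 : (0 : A) ∈ B)
    (hadd : ∀ x ∈ B, ∀ y ∈ B, x + y ∈ B)
    (hsm : ∀ (r : ℝ), ∀ x ∈ B, r • x ∈ B)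
    (hsup : ∀ x ∈ B, ∀ y ∈ B, x ⊔ y ∈ B)
    (hideal : ∀ a : A, ∀ x ∈ B, a * x ∈ B) :
    ∀ b ∈ B, |b| ≤ |b * b - b| → ∃ b' ∈ B, b + b' = b * b' := by
  have hmul' : ∀ a b : A, 0 ≤ a → 0 ≤ b → 0 ≤ a * b := hmul
  have hf' : ∀ a b c : A, a ⊓ b = 0 → 0 ≤ c → (a * c) ⊓ b = 0 ∧ (c * a) ⊓ b = 0 := hf
  intro b hb hle
  set c := |1 - b| with hc
  have h1 : |b| ≤ |b| * c := by
    calc |b| ≤ |b * b - b| := hle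
      _ = |b * (b - 1)| := by rw [show b * b - b = b * (b - 1) by ring]
      _ ≤ |b| * |b - 1| := aux_abs_mul_le hsmul hmul' b (b - 1)
      _ = |b| * c := by rw [hc, abs_sub_comm]
  have hone : (0:A) ≤ 1 := by
    have h := hmul' |(1:A)| |(1:A)| (abs_nonneg 1) (abs_nonneg 1)
    rw [aux_abs_sq hf' (1 : A)] at h; simpa using h
  have h2 : (1:A) ≤ c + |b| := by
    have : |(1:A)| ≤ |1 - b| + |b| := by
      calc |(1:A)| = |(1 - b) + b| := by norm_num
        _ ≤ |1 - b| + |b| := abs_add_le _ _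
    rwa [abs_of_nonneg hone] at this
  have h3 : (1:A) ≤ c * (1 + |b|) := by
    calc (1:A) ≤ c + |b| := h2
      _ ≤ c + |b| * c := add_le_add_right h1 c
      _ = c * (1 + |b|) := by ring
  obtain ⟨u, hu⟩ := hbic _ h3
  set w : A := ↑u⁻¹ with hw
  have hcv : c * ((1 + |b|) * w) = 1 := by
    rw [← mul_assoc, ← hu, hw]
    exact_mod_cast u.mul_inv
  set v₀ := (1 + |b|) * w with hv₀
  set v := v₀ * v₀ * (1 - b) with hv
  have hsq : (1 - b) * (1 - b) = c * c := (aux_abs_sq hf' (1 - b)).symm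
  have hxv : (1 - b) * v = 1 := by
    calc (1 - b) * v = ((1 - b) * (1 - b)) * (v₀ * v₀) := by rw [hv]; ring
      _ = (c * v₀) * (c * v₀) := by rw [hsq]; ring
      _ = 1 := by rw [hcv, one_mul]
  exact ⟨(-v) * b, hideal (-v) b hb, by linear_combination (-b) * hxv⟩
end
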